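/- arXiv:2306.03884 — 2 statements merged into one kernel-verified Lean document; each statement's English description precedes it below -/
import Mathlib

section
/- Let m > n ≥ 4 and let H be the multigraph obtained from a path s=v_0, v_1, …, v_{n-1}=t of length n-1 by replacing one edge of the path by a bundle of 2 parallel edges and replacing a different edge of the path by a bundle of m-n+1 parallel edges, with terminals s and t. Then N_{n-2}(H,s,t) = 2(m-n+1)(n-3) + 2 + (m-n+1), and this quantity exceeds 1+(n-2)(m-n+2) if and only if (m-n)(n-3) > 0; in particular N_{n-2}(H,s,t) > N_{n-2}(G_{n,m},s,t) whenever m > n ≥ 4. -/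
/-- A finite loopless multigraph: a finite vertex type `V`, a finite edge type `E`,
and an endpoint map assigning to each edge an unordered pair of distinct vertices. -/
structure Multigraph where
  V : Type
  E : Type
  [fintV : Fintype V]
  [fintE : Fintype E]
  [decV : DecidableEq V]
  [decE : DecidableEq E]
  ends : E → Sym2 V
  loopless : ∀ e, ¬ (ends e).IsDiag

attribute [instance] Multigraph.fintV Multigraph.fintE Multigraph.decV Multigraph.decE

namespace Multigraph

/-- The simple graph on `G.V` underlying the spanning subgraph of `G` with edge set `E'`. -/
def subgraph (G : Multigraph) (E' : Finset G.E) : SimpleGraph G.V where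
  Adj u v := u ≠ v ∧ ∃ e ∈ E', G.ends e = s(u, v)
  symm := by
    constructor
    rintro u v ⟨huv, e, he, hends⟩
    exact ⟨huv.symm, e, he, hends.trans (Sym2.eq_swap)⟩
  loopless := by constructor; rintro u ⟨h, -⟩; exact h rfl

/-- The spanning subgraph of `G` with edge set `E'` has exactly two connected components,
one containing `s` and the other containing `t`. -/
def SplitState (G : Multigraph) (s t : G.V) (E' : Finset G.E) : Prop :=
  ¬ (G.subgraph E').Reachable s t ∧
    ∀ v : G.V, (G.subgraph E').Reachable v s ∨ (G.subgraph E').Reachable v t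

open scoped Classical in
/-- The split reliability of `G` with terminals `s` and `t`, at edge probability `p`. -/
noncomputable def sRel (G : Multigraph) (s t : G.V) (p : ℝ) : ℝ :=
  ∑ E' : Finset G.E, if G.SplitState s t E' then
    p ^ E'.card * (1 - p) ^ (Fintype.card G.E - E'.card) else 0

open scoped Classical in
/-- `N_i(G,s,t)`: the number of edge subsets of cardinality `i` whose spanning subgraph has
exactly two connected components, one containing `s` and the other containing `t`. -/
noncomputable def Nst (G : Multigraph) (s t : G.V) (i : ℕ) : ℕ :=
  (Finset.univ.filter fun E' : Finset G.E => E'.card = i ∧ G.SplitState s t E').card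

/-- A multigraph is connected when its underlying simple graph is. -/
def Connected (G : Multigraph) : Prop := (G.subgraph Finset.univ).Connected

open scoped Classical in
/-- The all-terminal reliability of `G` at edge probability `p`. -/
noncomputable def Rel (G : Multigraph) (p : ℝ) : ℝ :=
  ∑ E' : Finset G.E, if (G.subgraph E').Connected then
    p ^ E'.card * (1 - p) ^ (Fintype.card G.E - E'.card) else 0

/-- `G` together with terminals `s ≠ t` is an optimal `(n,m)`-graph for split reliability. -/
def IsOptimal (n m : ℕ) (G : Multigraph) (s t : G.V) : Prop :=
  G.Connected ∧ Fintype.card G.V = n ∧ Fintype.card G.E = m ∧ s ≠ t ∧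
    ∀ (H : Multigraph) (s' t' : H.V), H.Connected → Fintype.card H.V = n →
      Fintype.card H.E = m → s' ≠ t' → ∀ p : ℝ, 0 < p → p < 1 →
        H.sRel s' t' p ≤ G.sRel s t p

/-- An isomorphism of multigraphs taking terminals `s,t` of `G` to terminals `u,v` of `H`. -/
def IsoTerm (G H : Multigraph) (s t : G.V) (u v : H.V) : Prop :=
  ∃ (φ : G.V ≃ H.V) (ψ : G.E ≃ H.E),
    (∀ e, H.ends (ψ e) = (G.ends e).map φ) ∧ φ s = u ∧ φ t = v

end Multigraph

namespace Multigraph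

/-- `Gnm n m k`: the multigraph obtained from a path `v_0, v_1, …, v_{n-1}` (terminals
`s = v_0`, `t = v_{n-1}`) by replacing the path edge from `v_k` to `v_{k+1}` by a bundle of
`m - n + 2` parallel edges (so that the graph has `m` edges in total when `m ≥ n - 1`). -/
def Gnm (n m k : ℕ) (hk : k < n - 1) : Multigraph where
  V := Fin n
  E := Fin m
  ends e :=
    if h : e.val < n - 1 then
      s((⟨e.val, by omega⟩ : Fin n), (⟨e.val + 1, by omega⟩ : Fin n))
    else
      s((⟨k, by omega⟩ : Fin n), (⟨k + 1, by omega⟩ : Fin n))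
  loopless e := by
    by_cases h : e.val < n - 1 <;>
      simp [h, Sym2.mk_isDiag_iff, Fin.ext_iff]

/-- The cycle on `n ≥ 2` vertices. -/
def cycleGraph (n : ℕ) (hn : 2 ≤ n) : Multigraph where
  V := Fin n
  E := Fin n
  ends e := s(e, (⟨(e.val + 1) % n, Nat.mod_lt _ (by omega)⟩ : Fin n))
  loopless e := by
    simp only [Sym2.mk_isDiag_iff, Fin.ext_iff, Fin.val_mk]
    intro hc
    rcases Nat.lt_or_ge (e.val + 1) n with h' | h'
    · rw [Nat.mod_eq_of_lt h'] at hc; omega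
    · have he : e.val + 1 = n := by have := e.isLt; omega
      rw [he, Nat.mod_self] at hc
      omega

/-- The multigraph obtained from `G` by adjoining a new vertex (`none`) joined by a single
new edge to the vertex `u` of `G`. -/
def addPendant (G : Multigraph) (u : G.V) : Multigraph where
  V := Option G.V
  E := Option G.E
  ends e := e.elim s(some u, none) (fun e' => (G.ends e').map some)
  loopless e := by
    cases e with
    | none => simp [Sym2.mk_isDiag_iff]
    | some e' =>
        show ¬ ((G.ends e').map some).IsDiag
        rw [Sym2.isDiag_map (Option.some_injective _)]
        exact G.loopless e'

/-- The disjoint union of two multigraphs. -/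
def disjSum (A B : Multigraph) : Multigraph where
  V := A.V ⊕ B.V
  E := A.E ⊕ B.E
  ends := Sum.elim (fun e => (A.ends e).map Sum.inl) (fun e => (B.ends e).map Sum.inr)
  loopless e := by
    cases e with
    | inl e =>
        show ¬ ((A.ends e).map Sum.inl).IsDiag
        rw [Sym2.isDiag_map Sum.inl_injective]
        exact A.loopless e
    | inr e =>
        show ¬ ((B.ends e).map Sum.inr).IsDiag
        rw [Sym2.isDiag_map Sum.inr_injective]
        exact B.loopless e

/-- The multigraph on three vertices `0, 1, 2` with a bundle of `a` parallel edges between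
`0` and `1` and a bundle of `b` parallel edges between `1` and `2`. -/
def doubleBundle (a b : ℕ) : Multigraph where
  V := Fin 3
  E := Fin (a + b)
  ends e := if e.val < a then s((0 : Fin 3), (1 : Fin 3)) else s((1 : Fin 3), (2 : Fin 3))
  loopless e := by
    by_cases h : e.val < a <;> simp [h, Sym2.mk_isDiag_iff]

/-- The multigraph on three vertices `0, 1, 2` with bundles of `a`, `b`, `c` parallel edges
between `0,1`, between `1,2`, and between `2,0` respectively. -/
def tripleBundle (a b c : ℕ) : Multigraph where
  V := Fin 3
  E := Fin (a + b + c)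
  ends e :=
    if e.val < a then s((0 : Fin 3), (1 : Fin 3))
    else if e.val < a + b then s((1 : Fin 3), (2 : Fin 3))
    else s((2 : Fin 3), (0 : Fin 3))
  loopless e := by
    by_cases h : e.val < a
    · simp [h, Sym2.mk_isDiag_iff]
    · by_cases h' : e.val < a + b <;> simp [h, h', Sym2.mk_isDiag_iff]

/-- The multigraph obtained from a path `v_0, …, v_{n-1}` by replacing the path edge at
position `k₁` by a bundle of `2` parallel edges and the path edge at position `k₂` by a
bundle of `m - n + 1` parallel edges (for `m ≥ n`, `k₁ ≠ k₂`, the graph has `m` edges). -/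
def Gnm2 (n m k₁ k₂ : ℕ) (hk₁ : k₁ < n - 1) (hk₂ : k₂ < n - 1) : Multigraph where
  V := Fin n
  E := Fin m
  ends e :=
    if h : e.val < n - 1 then
      s((⟨e.val, by omega⟩ : Fin n), (⟨e.val + 1, by omega⟩ : Fin n))
    else if e.val = n - 1 then
      s((⟨k₁, by omega⟩ : Fin n), (⟨k₁ + 1, by omega⟩ : Fin n))
    else
      s((⟨k₂, by omega⟩ : Fin n), (⟨k₂ + 1, by omega⟩ : Fin n))
  loopless e := by
    by_cases h : e.val < n - 1
    · simp [h, Sym2.mk_isDiag_iff, Fin.ext_iff]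
    · by_cases h' : e.val = n - 1 <;> simp [h, h', Sym2.mk_isDiag_iff, Fin.ext_iff]

/-- The simple graph on `n ≥ 4` vertices consisting of a path `s = v_0, …, v_{n-3} = t` of
length `n - 3` together with two further vertices `v_{n-2}, v_{n-1}` forming a triangle
with `t`. It has `n` vertices and `n` edges. -/
def triGraph (n : ℕ) (hn : 4 ≤ n) : Multigraph where
  V := Fin n
  E := Fin n
  ends e :=
    if h : e.val < n - 3 then
      s((⟨e.val, by omega⟩ : Fin n), (⟨e.val + 1, by omega⟩ : Fin n))
    else if e.val = n - 3 then
      s((⟨n - 3, by omega⟩ : Fin n), (⟨n - 2, by omega⟩ : Fin n))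
    else if e.val = n - 2 then
      s((⟨n - 2, by omega⟩ : Fin n), (⟨n - 1, by omega⟩ : Fin n))
    else
      s((⟨n - 1, by omega⟩ : Fin n), (⟨n - 3, by omega⟩ : Fin n))
  loopless e := by
    by_cases h : e.val < n - 3
    · simp [h, Sym2.mk_isDiag_iff, Fin.ext_iff]
    · by_cases h' : e.val = n - 3
      · simp only [dif_neg h, if_pos h', Sym2.mk_isDiag_iff, Fin.mk.injEq]; omega
      · by_cases h'' : e.val = n - 2
        · simp only [dif_neg h, if_neg h', if_pos h'', Sym2.mk_isDiag_iff, Fin.mk.injEq]; omega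
        · simp only [dif_neg h, if_neg h', if_neg h'', Sym2.mk_isDiag_iff, Fin.mk.injEq]; omega

end Multigraph

/-!
Suppose every edge of a multigraph lies along a path `s = v_0, v_1, …, v_N = t`, the edge at
position `i` joining `v_i` and `v_{i+1}`. An edge set leaves exactly two components, one
containing `s` and one containing `t`, precisely when it covers every position but one: two
uncovered positions `j < j'` would cut `v_{j+1}` off from both terminals. Such a set of size
`N - 1` picks one edge from each bundle but one, so `N_{N-1} = ∑_j ∏_{i ≠ j} c_i`, where `c_i`
is the size of the bundle at position `i`. For `G_{n,m}` one bundle has size `m - n + 2`, giving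
`1 + (n-2)(m-n+2)`; for `H` the bundles of sizes `2` and `m - n + 1` give
`2(m-n+1)(n-3) + 2 + (m-n+1)`, which is larger by exactly `(m-n)(n-3)`.
-/

open Finset

theorem card_transversals {α β : Type*} [Fintype α] [DecidableEq α] [DecidableEq β]
    (f : α → β) (σ : Finset β) :
    #{E : Finset α | #E = #σ ∧ E.image f = σ} = ∏ i ∈ σ, #{e | f e = i} := by
  induction σ using Finset.induction_on with
  | empty => simp [Finset.filter_eq']
  | insert a σ ha ih =>
    rw [prod_insert ha, ← ih, ← card_product]
    symm
    have not_mem_of_eq : ∀ {e : α} {E : Finset α}, E.image f = σ → f e = a → e ∉ E :=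
      fun hE he heE => ha (hE ▸ he ▸ mem_image_of_mem f heE)
    apply card_nbij (fun p => insert p.1 p.2)
    · intro p hp
      simp only [coe_product, coe_filter, Set.mem_prod, mem_univ, true_and, Set.mem_ofPred] at hp ⊢
      obtain ⟨hp1, hcard, himg⟩ := hp
      rw [card_insert_of_notMem (not_mem_of_eq himg hp1), card_insert_of_notMem ha, hcard,
        image_insert, hp1, himg]
      exact ⟨rfl, rfl⟩
    · intro p hp q hq hpq
      simp only [coe_product, coe_filter, Set.mem_prod, mem_univ, true_and,
        Set.mem_ofPred] at hp hq hpq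
      have h1 : p.1 = q.1 := by
        have := hpq ▸ mem_insert_self p.1 p.2
        exact (mem_insert.1 this).resolve_right (not_mem_of_eq hq.2.2 hp.1)
      have h2 : p.2 = q.2 := by
        rw [← erase_insert (not_mem_of_eq hp.2.2 hp.1), hpq, h1,
          erase_insert (not_mem_of_eq hq.2.2 hq.1)]
      exact Prod.ext h1 h2
    · intro E hE
      simp only [coe_filter, mem_univ, true_and, Set.mem_ofPred] at hE
      obtain ⟨hcard, himg⟩ := hE
      obtain ⟨e, he, hfe⟩ := mem_image.1 (himg ▸ mem_insert_self a σ)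
      have hinj : Set.InjOn f E := by
        rw [← card_image_iff, himg, hcard, card_insert_of_notMem ha]
      refine ⟨(e, E.erase e), ?_, insert_erase he⟩
      simp only [coe_product, coe_filter, Set.mem_prod, mem_univ, true_and, Set.mem_ofPred]
      refine ⟨hfe, by rw [card_erase_of_mem he, hcard, card_insert_of_notMem ha]; rfl, ?_⟩
      rw [erase_eq, image_sdiff_of_injOn hinj (singleton_subset_iff.2 he), image_singleton,
        himg, hfe, ← erase_eq, erase_insert ha]

theorem sum_eq_of_eq_off_pair {ι : Type*} [Fintype ι] [DecidableEq ι] {g : ι → ℕ} {K₁ K₂ : ι}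
    {c : ℕ} (hK : K₁ ≠ K₂) (hg : ∀ i, i ≠ K₁ → i ≠ K₂ → g i = c) :
    ∑ i, g i = g K₁ + g K₂ + (Fintype.card ι - 2) * c := by
  have hK₂ : K₂ ∈ univ.erase K₁ := mem_erase.2 ⟨hK.symm, mem_univ K₂⟩
  rw [← add_sum_erase _ _ (mem_univ K₁), ← add_sum_erase _ _ hK₂,
    sum_congr rfl fun i hi => hg i (ne_of_mem_erase (mem_of_mem_erase hi)) (ne_of_mem_erase hi),
    sum_const, card_erase_of_mem hK₂, card_erase_of_mem (mem_univ _), card_univ, smul_eq_mul,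
    add_assoc, Nat.sub_sub]

theorem sum_prod_erase_eq_of_eq_one_off_pair {ι : Type*} [Fintype ι] [DecidableEq ι]
    {f : ι → ℕ} {K₁ K₂ : ι} (hK : K₁ ≠ K₂) (hf : ∀ i, i ≠ K₁ → i ≠ K₂ → f i = 1) :
    ∑ j, ∏ i ∈ univ.erase j, f i = f K₂ + f K₁ + (Fintype.card ι - 2) * (f K₁ * f K₂) := by
  rw [sum_eq_of_eq_off_pair hK (c := f K₁ * f K₂)]
  · rw [prod_eq_single_of_mem K₂ (mem_erase.2 ⟨hK.symm, mem_univ _⟩)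
        fun i hi h₂ => hf i (ne_of_mem_erase hi) h₂,
      prod_eq_single_of_mem K₁ (mem_erase.2 ⟨hK, mem_univ _⟩)
        fun i hi h₁ => hf i h₁ (ne_of_mem_erase hi)]
  · intro j h₁ h₂
    exact prod_eq_mul K₁ K₂ hK (fun i hi h => hf i h.1 h.2)
      (fun h => absurd (mem_erase.2 ⟨h₁.symm, mem_univ _⟩) h)
      (fun h => absurd (mem_erase.2 ⟨h₂.symm, mem_univ _⟩) h)

theorem card_fiber_add_card_fiber_of_eq_one_off_pair {α β : Type*} [Fintype α] [Fintype β]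
    [DecidableEq β] {f : α → β} {b₁ b₂ : β} (hb : b₁ ≠ b₂)
    (h1 : ∀ b, b ≠ b₁ → b ≠ b₂ → #{a | f a = b} = 1) :
    #{a | f a = b₁} + #{a | f a = b₂} + (Fintype.card β - 2) = Fintype.card α := by
  rw [← mul_one (_ - 2), ← sum_eq_of_eq_off_pair hb h1]
  exact (card_eq_sum_card_fiberwise fun _ _ => mem_univ _).symm

namespace Multigraph

section PathBundle

variable {N M : ℕ} {ends : Fin M → Sym2 (Fin (N + 1))} {hl : ∀ e, ¬ (ends e).IsDiag}
  {pos : Fin M → Fin N}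

theorem le_castSucc_iff_of_reachable (hends : ∀ e, ends e = s((pos e).castSucc, (pos e).succ))
    {E' : Finset (Fin M)} {j : Fin N} (hj : j ∉ E'.image pos) {u v : Fin (N + 1)}
    (huv : ((mk _ _ ends hl).subgraph E').Reachable u v) :
    u ≤ j.castSucc ↔ v ≤ j.castSucc := by
  obtain ⟨w⟩ := huv
  induction w with
  | nil => rfl
  | cons hadj _ ih =>
    obtain ⟨-, e, he, hee⟩ := hadj
    have hpe : (pos e).val ≠ j.val := fun h => hj (mem_image.2 ⟨e, he, Fin.ext h⟩)
    rw [← ih]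
    rcases Sym2.eq_iff.1 ((hends e).symm.trans hee) with ⟨rfl, rfl⟩ | ⟨rfl, rfl⟩ <;>
      simp only [Fin.le_def, Fin.val_castSucc, Fin.val_succ] <;> omega

theorem reachable_of_forall_mem_image (hends : ∀ e, ends e = s((pos e).castSucc, (pos e).succ))
    {E' : Finset (Fin M)} {u v : Fin (N + 1)} (huv : u ≤ v)
    (hcov : ∀ j : Fin N, u ≤ j.castSucc → j.succ ≤ v → j ∈ E'.image pos) :
    ((mk _ _ ends hl).subgraph E').Reachable u v := by
  induction v using Fin.induction with
  | zero => rw [le_antisymm huv (Fin.zero_le u)]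
  | succ i ih =>
    rcases eq_or_lt_of_le huv with rfl | hlt
    · rfl
    obtain ⟨e, he, rfl⟩ := mem_image.1 (hcov i (Fin.le_castSucc_iff.2 hlt) le_rfl)
    have hadj : ((mk _ _ ends hl).subgraph E').Adj (pos e).castSucc (pos e).succ :=
      ⟨Fin.castSucc_lt_succ.ne, e, he, hends e⟩
    exact (ih (Fin.le_castSucc_iff.2 hlt)
      fun j hj hjv => hcov j hj (hjv.trans (Fin.castSucc_le_succ _))).trans hadj.reachable

theorem splitState_iff (hends : ∀ e, ends e = s((pos e).castSucc, (pos e).succ))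
    (E' : Finset (Fin M)) :
    (mk _ _ ends hl).SplitState 0 (Fin.last N) E' ↔ ∃ j, E'.image pos = univ.erase j := by
  constructor
  · rintro ⟨hst, hside⟩
    obtain ⟨j, hj⟩ : ∃ j, j ∉ E'.image pos := by
      by_contra! hall
      exact hst (reachable_of_forall_mem_image hends (Fin.zero_le _) fun j _ _ => hall j)
    have hlt : ∀ j j', j ∉ E'.image pos → j' ∉ E'.image pos → ¬ j < j' := by
      intro j j' hj hj' hjj'
      rcases hside j.succ with h | h
      · have := le_castSucc_iff_of_reachable hends hj h
        simp only [Fin.le_def, Fin.val_castSucc, Fin.val_succ, Fin.val_zero] at this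
        omega
      · have := le_castSucc_iff_of_reachable hends hj' h
        simp only [Fin.le_def, Fin.val_castSucc, Fin.val_succ, Fin.val_last, Fin.lt_def]
          at this hjj'
        omega
    refine ⟨j, ext fun i => ?_⟩
    rw [mem_erase, and_iff_left (mem_univ i)]
    refine ⟨fun hi hij => hj (hij ▸ hi), fun hij => ?_⟩
    by_contra hi
    rcases lt_or_gt_of_ne hij with h | h
    exacts [hlt i j hi hj h, hlt j i hj hi h]
  · rintro ⟨j, hE⟩
    have hj : j ∉ E'.image pos := by simp [hE]
    have hcov : ∀ i, i ≠ j → i ∈ E'.image pos := by simp [hE]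
    refine ⟨fun h => ?_, fun v => ?_⟩
    · have := le_castSucc_iff_of_reachable hends hj h
      simp only [Fin.le_def, Fin.val_castSucc, Fin.val_zero, Fin.val_last] at this
      omega
    rcases le_or_gt v j.castSucc with hv | hv
    · refine .inl (reachable_of_forall_mem_image hends (Fin.zero_le v) fun i _ hi => hcov i ?_).symm
      rintro rfl
      exact absurd (hi.trans hv) (not_le.2 Fin.castSucc_lt_succ)
    · refine .inr (reachable_of_forall_mem_image hends (Fin.le_last v) fun i hi _ => hcov i ?_)
      rintro rfl
      exact absurd hv (not_lt.2 hi)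

theorem nst_eq_sum_prod (hends : ∀ e, ends e = s((pos e).castSucc, (pos e).succ)) :
    (mk _ _ ends hl).Nst 0 (Fin.last N) (N - 1) =
      ∑ j, ∏ i ∈ univ.erase j, #{e | pos e = i} := by
  classical
  have hcard : ∀ j : Fin N, #(univ.erase j) = N - 1 := fun j => by simp
  have hsplit : ({E' | #E' = N - 1 ∧ (mk _ _ ends hl).SplitState 0 (Fin.last N) E'} :
      Finset (Finset (Fin M))) =
      univ.biUnion fun j => {E' | #E' = #(univ.erase j) ∧ E'.image pos = univ.erase j} := by
    ext E'
    simp only [mem_filter, mem_biUnion, mem_univ, true_and, splitState_iff hends, hcard,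
      exists_and_left]
  rw [Nst, hsplit, card_biUnion]
  · exact sum_congr rfl fun j _ => card_transversals pos _
  · intro j _ j' _ hjj'
    exact disjoint_filter.2 fun E' _ h h' =>
      hjj' ((erase_inj _ (mem_univ j)).1 (h.2.symm.trans h'.2))

theorem nst_eq_of_card_fiber_eq_one_off_pair
    (hends : ∀ e, ends e = s((pos e).castSucc, (pos e).succ)) {K₁ K₂ : Fin N} (hK : K₁ ≠ K₂)
    (h1 : ∀ i, i ≠ K₁ → i ≠ K₂ → #{e | pos e = i} = 1) :
    (mk _ _ ends hl).Nst 0 (Fin.last N) (N - 1) = #{e | pos e = K₂} + #{e | pos e = K₁} +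
      (N - 2) * (#{e | pos e = K₁} * #{e | pos e = K₂}) := by
  rw [nst_eq_sum_prod hends, sum_prod_erase_eq_of_eq_one_off_pair hK h1, Fintype.card_fin]

end PathBundle

theorem nst_Gnm {n m k : ℕ} (hn : 3 ≤ n) (hm : n ≤ m) (hk : k < n - 1) :
    (Gnm n m k hk).Nst ⟨0, by omega⟩ ⟨n - 1, by omega⟩ (n - 2) = 1 + (n - 2) * (m - n + 2) := by
  obtain ⟨N, rfl⟩ : ∃ N, n = N + 1 := ⟨n - 1, by omega⟩
  let pos : Fin m → Fin N := fun e => if h : e.val < N then ⟨e, h⟩ else ⟨k, hk⟩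
  have hends : ∀ e, (Gnm (N + 1) m k hk).ends e = s((pos e).castSucc, (pos e).succ) := by
    intro e
    by_cases h : e.val < N <;> simp [Gnm, pos, h]
  have hfiber : ∀ i : Fin N, i.val ≠ k → #{e | pos e = i} = 1 := by
    intro i hi
    refine card_eq_one.2 ⟨⟨i, by omega⟩, ext fun e => ?_⟩
    simp only [mem_filter, mem_univ, true_and, mem_singleton, pos, Fin.ext_iff]
    split_ifs <;> grind
  obtain ⟨K, hK⟩ := Fintype.exists_ne_of_one_lt_card (by simp; omega) (⟨k, hk⟩ : Fin N)
  have h1 : ∀ i : Fin N, i ≠ ⟨k, hk⟩ → i ≠ K → #{e | pos e = i} = 1 :=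
    fun i hi _ => hfiber i fun h => hi (Fin.ext h)
  have hfiberK := hfiber K fun h => hK (Fin.ext h)
  have hM := card_fiber_add_card_fiber_of_eq_one_off_pair hK.symm h1
  rw [hfiberK, Fintype.card_fin, Fintype.card_fin] at hM
  refine (nst_eq_of_card_fiber_eq_one_off_pair (hl := (Gnm (N + 1) m k hk).loopless) hends
    hK.symm h1).trans ?_
  rw [hfiberK, show N + 1 - 2 = N - 2 + 1 by omega,
    show m - (N + 1) + 2 = #{e | pos e = ⟨k, hk⟩} by omega]
  ring

theorem nst_Gnm2 {n m k₁ k₂ : ℕ} (hm : n ≤ m) (hk₁ : k₁ < n - 1) (hk₂ : k₂ < n - 1)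
    (hne : k₁ ≠ k₂) :
    (Gnm2 n m k₁ k₂ hk₁ hk₂).Nst ⟨0, by omega⟩ ⟨n - 1, by omega⟩ (n - 2) =
      2 * (m - n + 1) * (n - 3) + 2 + (m - n + 1) := by
  obtain ⟨N, rfl⟩ : ∃ N, n = N + 1 := ⟨n - 1, by omega⟩
  let pos : Fin m → Fin N := fun e =>
    if h : e.val < N then ⟨e, h⟩ else if e.val = N then ⟨k₁, hk₁⟩ else ⟨k₂, hk₂⟩
  have hends : ∀ e, (Gnm2 (N + 1) m k₁ k₂ hk₁ hk₂).ends e = s((pos e).castSucc, (pos e).succ) := by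
    intro e
    by_cases h : e.val < N
    · simp [Gnm2, pos, h]
    · by_cases h' : e.val = N <;> simp [Gnm2, pos, h, h']
  have hfiber : ∀ i : Fin N, i.val ≠ k₁ → i.val ≠ k₂ → #{e | pos e = i} = 1 := by
    intro i hi₁ hi₂
    refine card_eq_one.2 ⟨⟨i, by omega⟩, ext fun e => ?_⟩
    simp only [mem_filter, mem_univ, true_and, mem_singleton, pos, Fin.ext_iff]
    split_ifs <;> grind
  have hfiber₁ : #{e | pos e = ⟨k₁, hk₁⟩} = 2 := by
    refine card_eq_two.2
      ⟨⟨k₁, by omega⟩, ⟨N, by omega⟩, by simp [Fin.ext_iff]; omega, ext fun e => ?_⟩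
    simp only [mem_filter, mem_univ, true_and, mem_insert, mem_singleton, pos, Fin.ext_iff]
    split_ifs <;> grind
  have hK : (⟨k₁, hk₁⟩ : Fin N) ≠ ⟨k₂, hk₂⟩ := fun h => hne (congrArg Fin.val h)
  have h1 : ∀ i : Fin N, i ≠ ⟨k₁, hk₁⟩ → i ≠ ⟨k₂, hk₂⟩ → #{e | pos e = i} = 1 :=
    fun i hi₁ hi₂ => hfiber i (fun h => hi₁ (Fin.ext h)) fun h => hi₂ (Fin.ext h)
  have hM := card_fiber_add_card_fiber_of_eq_one_off_pair hK h1
  rw [hfiber₁, Fintype.card_fin, Fintype.card_fin] at hM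
  refine (nst_eq_of_card_fiber_eq_one_off_pair (hl := (Gnm2 (N + 1) m k₁ k₂ hk₁ hk₂).loopless)
    hends hK h1).trans ?_
  rw [hfiber₁, show N + 1 - 3 = N - 2 by omega,
    show m - (N + 1) + 1 = #{e | pos e = ⟨k₂, hk₂⟩} by omega]
  ring

end Multigraph

/-- For `m > n ≥ 4`, the graph `H` obtained from a path of length `n-1`
between `s` and `t` by replacing one path edge by a bundle of `2` parallel edges and a
different path edge by a bundle of `m-n+1` parallel edges satisfies
`N_{n-2}(H,s,t) = 2(m-n+1)(n-3) + 2 + (m-n+1)`, which exceeds `1+(n-2)(m-n+2)` iff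
`(m-n)(n-3) > 0`; in particular `N_{n-2}(H,s,t) > N_{n-2}(G_{n,m},s,t)`. -/
theorem Nst_Gnm2 (n m : ℕ) (hn : 4 ≤ n) (hm : n < m)
    (k₁ k₂ : ℕ) (hk₁ : k₁ < n - 1) (hk₂ : k₂ < n - 1) (hne : k₁ ≠ k₂) :
    (Multigraph.Gnm2 n m k₁ k₂ hk₁ hk₂).Nst
        (⟨0, by omega⟩ : Fin n) (⟨n - 1, by omega⟩ : Fin n) (n - 2) =
      2 * (m - n + 1) * (n - 3) + 2 + (m - n + 1) ∧
    (2 * (m - n + 1) * (n - 3) + 2 + (m - n + 1) > 1 + (n - 2) * (m - n + 2) ↔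
      (m - n) * (n - 3) > 0) ∧
    (∀ (k : ℕ) (hk : k < n - 1),
      (Multigraph.Gnm n m k hk).Nst
          (⟨0, by omega⟩ : Fin n) (⟨n - 1, by omega⟩ : Fin n) (n - 2) <
        (Multigraph.Gnm2 n m k₁ k₂ hk₁ hk₂).Nst
          (⟨0, by omega⟩ : Fin n) (⟨n - 1, by omega⟩ : Fin n) (n - 2)) := by
  have hgap : 2 * (m - n + 1) * (n - 3) + 2 + (m - n + 1) =
      1 + (n - 2) * (m - n + 2) + (m - n) * (n - 3) := by
    zify [hm.le, (by omega : 3 ≤ n), (by omega : 2 ≤ n)]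
    ring
  have hpos : 0 < (m - n) * (n - 3) := Nat.mul_pos (by omega) (by omega)
  refine ⟨Multigraph.nst_Gnm2 hm.le hk₁ hk₂ hne, hgap ▸ lt_add_iff_pos_right _, fun k hk => ?_⟩
  rw [Multigraph.nst_Gnm (by omega) hm.le hk, Multigraph.nst_Gnm2 hm.le hk₁ hk₂ hne, hgap]
  exact lt_add_of_pos_right _ hpos
end

section
/- Let n ≥ 7 and let H be the simple graph on n vertices obtained from a path s=u_0, u_1, …, u_{n-3}=t of length n-3 together with two additional vertices w_1, w_2 forming a triangle with t (i.e., edges t–w_1, w_1–w_2, w_2–t), so that H has n vertices and n edges. Then N_{n-2}(H,s,t) = 3(n-3), and 3(n-3) > 1 + 2(n-2) = N_{n-2}(G_{n,n},s,t). -/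
/-!
Both graphs have `n` edges, so a state with `n - 2` edges is the complement of a pair of
edges. Both are the path `v₀, …, v_{n-1}` (edge `e` joins `v_e` and `v_{e+1}`) plus one extra
edge `n - 1`: in `H` it closes the triangle on `t = v_{n-3}, v_{n-2}, v_{n-1}`, in `G_{n,n}` it
doubles the edge `v_k v_{k+1}`. Removing a pair splits `s` from `t` exactly when it cuts the
graph once: in `H` when it consists of a path edge and a triangle edge (`3(n-3)` pairs), in
`G_{n,n}` when it meets the two copies of `v_k v_{k+1}` (`C(n,2) - C(n-2,2) = 2n - 3` pairs).
Any other pair cuts the path twice, and the vertices strictly between the two cuts reach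
neither terminal.
-/

open Finset

theorem Sym2.iff_of_mk_eq_mk {α : Type*} {P : α → Prop} {x y u v : α} (h : s(x, y) = s(u, v))
    (hxy : P x ↔ P y) : P u ↔ P v := by
  rcases Sym2.eq_iff.mp h with ⟨rfl, rfl⟩ | ⟨rfl, rfl⟩
  exacts [hxy, hxy.symm]

theorem Fin.mem_compl_pair_iff {N : ℕ} {a b e : Fin N} :
    e ∈ ({a, b} : Finset (Fin N))ᶜ ↔ e.val ≠ a.val ∧ e.val ≠ b.val := by
  simp [Fin.ext_iff]

theorem SimpleGraph.reachable_fin_of_adj_succ {N : ℕ} {H : SimpleGraph (Fin N)} {a b : ℕ}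
    (ha : a < N) (hb : b < N) (hab : a ≤ b)
    (h : ∀ m (hm : m + 1 < N), a ≤ m → m < b → H.Adj ⟨m, by omega⟩ ⟨m + 1, hm⟩) :
    H.Reachable ⟨a, ha⟩ ⟨b, hb⟩ := by
  induction b, hab using Nat.le_induction with
  | base => rfl
  | succ b hab ih =>
    exact (ih (by omega) fun m hm h₁ h₂ => h m hm h₁ (by omega)).trans
      (h b hb hab (by omega)).reachable

theorem Finset.card_filter_powersetCard_not_disjoint {α : Type*} [Fintype α] [DecidableEq α]
    (k : ℕ) (T : Finset α) :
    #{F ∈ powersetCard k (univ : Finset α) | ¬Disjoint F T} =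
      (Fintype.card α).choose k - (Fintype.card α - #T).choose k := by
  have hdisj : {F ∈ powersetCard k (univ : Finset α) | Disjoint F T} = powersetCard k Tᶜ := by
    ext F
    simp [subset_compl_iff_disjoint_right, and_comm]
  rw [filter_not, card_sdiff_of_subset (filter_subset _ _), hdisj, card_powersetCard,
    card_powersetCard, card_univ, card_compl]

theorem Finset.card_filter_powersetCard_two_card_inter_eq_one {α : Type*} [Fintype α]
    [DecidableEq α] (A : Finset α) :
    #{F ∈ powersetCard 2 (univ : Finset α) | #(F ∩ A) = 1} = #A * #Aᶜ := by
  rw [← card_product]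
  symm
  refine card_bij (fun p _ => {p.1, p.2}) ?_ ?_ ?_
  · rintro ⟨a, b⟩ hab
    simp only [mem_product, mem_compl] at hab
    have hne : a ≠ b := by rintro rfl; exact hab.2 hab.1
    simp [card_pair hne, insert_inter_of_mem hab.1, singleton_inter_of_notMem hab.2]
  · rintro ⟨a, b⟩ hab ⟨a', b'⟩ hab' h
    simp only [mem_product, mem_compl] at hab hab'
    have ha : a ∈ ({a', b'} : Finset α) := h ▸ mem_insert_self a {b}
    have hb : b ∈ ({a', b'} : Finset α) := h ▸ mem_insert_of_mem (mem_singleton_self b)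
    simp only [mem_insert, mem_singleton] at ha hb
    obtain rfl | rfl := ha
    · obtain rfl | rfl := hb
      · exact absurd hab'.1 hab.2
      · rfl
    · exact absurd hab.1 hab'.2
  · intro F hF
    simp only [mem_filter, mem_powersetCard_univ] at hF
    obtain ⟨a, ha⟩ := card_eq_one.mp hF.2
    obtain ⟨b, hb⟩ : ∃ b, F \ A = {b} := card_eq_one.mp (by
      have := card_sdiff_add_card_inter F A
      omega)
    have haA : a ∈ F ∩ A := ha ▸ mem_singleton_self a
    have hbA : b ∈ F \ A := hb ▸ mem_singleton_self b
    refine ⟨(a, b), mem_product.mpr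
      ⟨(mem_inter.mp haA).2, mem_compl.mpr (mem_sdiff.mp hbA).2⟩, ?_⟩
    rw [← sdiff_union_inter F A, ha, hb, union_comm]
    rfl

namespace Multigraph

variable {G : Multigraph} {E' : Finset G.E}

theorem subgraph_adj_of_mem {e : G.E} (he : e ∈ E') {u v : G.V} (h : G.ends e = s(u, v)) :
    (G.subgraph E').Adj u v := by
  refine ⟨?_, e, he, h⟩
  rintro rfl
  exact G.loopless e (h ▸ Sym2.mk_isDiag_iff.mpr rfl)

theorem iff_of_reachable {P : G.V → Prop}
    (hP : ∀ e ∈ E', ∀ u v, G.ends e = s(u, v) → (P u ↔ P v)) {a b : G.V}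
    (hab : (G.subgraph E').Reachable a b) : P a ↔ P b := by
  obtain ⟨w⟩ := hab
  induction w with
  | nil => rfl
  | cons hadj _ ih =>
    obtain ⟨-, e, he, hends⟩ := hadj
    exact (hP e he _ _ hends).trans ih

theorem splitState_of_cut {s t : G.V} (P : G.V → Prop)
    (hP : ∀ e ∈ E', ∀ u v, G.ends e = s(u, v) → (P u ↔ P v)) (hs : P s) (ht : ¬P t)
    (hreach_s : ∀ v, P v → (G.subgraph E').Reachable v s)
    (hreach_t : ∀ v, ¬P v → (G.subgraph E').Reachable v t) : G.SplitState s t E' :=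
  ⟨fun h => ht ((iff_of_reachable hP h).mp hs),
    fun v => (em (P v)).imp (hreach_s v) (hreach_t v)⟩

theorem not_splitState_of_closed {s t v : G.V} (P : G.V → Prop)
    (hP : ∀ e ∈ E', ∀ u v, G.ends e = s(u, v) → (P u ↔ P v)) (hv : P v) (hs : ¬P s)
    (ht : ¬P t) : ¬G.SplitState s t E' := by
  rintro ⟨-, hsplit⟩
  rcases hsplit v with h | h
  · exact hs ((iff_of_reachable hP h).mp hv)
  · exact ht ((iff_of_reachable hP h).mp hv)

open scoped Classical in
theorem Nst_card_sub (s t : G.V) {j : ℕ} (hj : j ≤ Fintype.card G.E) :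
    G.Nst s t (Fintype.card G.E - j) = #{F ∈ powersetCard j univ | G.SplitState s t Fᶜ} := by
  refine card_nbij' (·ᶜ) (·ᶜ) ?_ ?_ (fun F _ => compl_compl F) (fun F _ => compl_compl F)
  · intro F hF
    simp only [coe_filter, mem_univ, true_and, Set.mem_ofPred_eq, mem_powersetCard,
      subset_univ, compl_compl] at hF ⊢
    refine ⟨?_, hF.2⟩
    have := card_le_univ F
    rw [card_compl] at *
    omega
  · intro F hF
    simp only [coe_filter, mem_univ, true_and, Set.mem_ofPred_eq, mem_powersetCard,
      subset_univ] at hF ⊢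
    exact ⟨by rw [card_compl, hF.1], hF.2⟩

section Gnm

variable {n m k : ℕ} (hk : k < n - 1)

theorem Gnm_ends_of_lt {e : Fin m} (he : e.val < n - 1) :
    (Gnm n m k hk).ends e = s(⟨e.val, by omega⟩, ⟨e.val + 1, by omega⟩) := dif_pos he

theorem Gnm_ends_of_le {e : Fin m} (he : n - 1 ≤ e.val) :
    (Gnm n m k hk).ends e = s(⟨k, by omega⟩, ⟨k + 1, by omega⟩) := dif_neg (by omega)

theorem Gnm_val_le_iff_of_ends {c : ℕ} {e : Fin m} {u v : Fin n}
    (h : (Gnm n m k hk).ends e = s(u, v)) (hpath : e.val < n - 1 → e.val ≠ c)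
    (hbundle : n - 1 ≤ e.val → k ≠ c) : u.val ≤ c ↔ v.val ≤ c := by
  rcases lt_or_ge e.val (n - 1) with he | he
  · rw [Gnm_ends_of_lt hk he] at h
    exact Sym2.iff_of_mk_eq_mk (P := fun w : Fin n => w.val ≤ c) h
      (by have := hpath he; dsimp only; omega)
  · rw [Gnm_ends_of_le hk he] at h
    exact Sym2.iff_of_mk_eq_mk (P := fun w : Fin n => w.val ≤ c) h
      (by have := hbundle he; dsimp only; omega)

theorem Gnm_splitState_compl_pair {a b : Fin n} (ha : a.val < n - 1)
    (hb : b.val = n - 1 ∨ b.val = k ∧ a.val ≠ k) :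
    (Gnm n n k hk).SplitState ⟨0, by omega⟩ ⟨n - 1, by omega⟩ {a, b}ᶜ := by
  have hadj (j : ℕ) (hj : j + 1 < n) (hja : j ≠ a.val) :
      ((Gnm n n k hk).subgraph {a, b}ᶜ).Adj ⟨j, by omega⟩ ⟨j + 1, hj⟩ := by
    by_cases hjb : j = b.val
    · obtain rfl : j = k := by omega
      exact subgraph_adj_of_mem ((Fin.mem_compl_pair_iff (e := ⟨n - 1, by omega⟩)).mpr
        ⟨show n - 1 ≠ a.val by omega, show n - 1 ≠ b.val by omega⟩)
        (Gnm_ends_of_le hk le_rfl)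
    · exact subgraph_adj_of_mem
        ((Fin.mem_compl_pair_iff (e := ⟨j, by omega⟩)).mpr ⟨hja, hjb⟩)
        (Gnm_ends_of_lt hk (e := ⟨j, by omega⟩) (by dsimp only; omega))
  refine splitState_of_cut (fun v : Fin n => v.val ≤ a.val) ?_ (Nat.zero_le _)
    (by dsimp only; omega) ?_ ?_
  · intro (e : Fin n) he (u : Fin n) (v : Fin n) h
    replace he := Fin.mem_compl_pair_iff.mp he
    exact Gnm_val_le_iff_of_ends hk h (fun _ => he.1) (fun _ => by omega)
  · intro v hv
    exact (SimpleGraph.reachable_fin_of_adj_succ _ _ (Nat.zero_le _)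
      fun j hj _ hjv => hadj j hj (by omega)).symm
  · intro v hv
    exact SimpleGraph.reachable_fin_of_adj_succ _ _ (by omega)
      fun j hj hvj _ => hadj j hj (by omega)

theorem Gnm_not_splitState_compl_pair {a b : Fin n} (hab : a.val < b.val) (hb : b.val < n - 1)
    (hak : a.val ≠ k) (hbk : b.val ≠ k) :
    ¬(Gnm n n k hk).SplitState ⟨0, by omega⟩ ⟨n - 1, by omega⟩ {a, b}ᶜ := by
  refine not_splitState_of_closed (v := (⟨a.val + 1, by omega⟩ : Fin n))
    (fun v : Fin n => a.val < v.val ∧ v.val ≤ b.val) ?_ (by dsimp only; omega)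
    (by dsimp only; omega) (by dsimp only; omega)
  intro (e : Fin n) he (u : Fin n) (v : Fin n) h
  replace he := Fin.mem_compl_pair_iff.mp he
  have := Gnm_val_le_iff_of_ends hk (c := a.val) h (fun _ => he.1) (fun _ => by omega)
  have := Gnm_val_le_iff_of_ends hk (c := b.val) h (fun _ => he.2) (fun _ => by omega)
  omega

theorem Gnm_splitState_compl_iff {F : Finset (Fin n)} (hF : #F = 2) :
    (Gnm n n k hk).SplitState ⟨0, by omega⟩ ⟨n - 1, by omega⟩ Fᶜ ↔
      ¬Disjoint F {⟨k, by omega⟩, ⟨n - 1, by omega⟩} := by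
  obtain ⟨a, b, hab, rfl⟩ := card_eq_two.mp hF
  have hab' : a.val ≠ b.val := Fin.val_ne_of_ne hab
  have := a.isLt
  have := b.isLt
  simp only [disjoint_insert_left, disjoint_insert_right, mem_insert, mem_singleton,
    disjoint_singleton, ne_eq, Fin.ext_iff]
  constructor
  · intro hsplit
    by_contra! hnot
    rcases lt_or_gt_of_ne hab' with h | h
    · exact Gnm_not_splitState_compl_pair hk h (by omega) (by omega) (by omega) hsplit
    · exact Gnm_not_splitState_compl_pair hk h (by omega) (by omega) (by omega)
        (pair_comm a b ▸ hsplit)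
  · intro hmeet
    by_cases hcase : b.val = n - 1 ∨ b.val = k ∧ a.val ≠ n - 1
    · exact Gnm_splitState_compl_pair hk (by omega) (by omega)
    · rw [pair_comm]
      exact Gnm_splitState_compl_pair hk (by omega) (by omega)

theorem Gnm_Nst :
    (Gnm n n k hk).Nst ⟨0, by omega⟩ ⟨n - 1, by omega⟩ (n - 2) = 1 + 2 * (n - 2) := by
  classical
  have hcard : Fintype.card (Gnm n n k hk).E = n := Fintype.card_fin n
  have h := Nst_card_sub (G := Gnm n n k hk) ⟨0, by omega⟩ ⟨n - 1, by omega⟩ (j := 2)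
    (by omega)
  rw [hcard] at h
  rw [h]
  calc _ = #{F ∈ powersetCard 2 (univ : Finset (Fin n)) |
          ¬Disjoint F {⟨k, by omega⟩, ⟨n - 1, by omega⟩}} :=
        congrArg card (filter_congr fun F hF =>
          Gnm_splitState_compl_iff hk (mem_powersetCard_univ.mp hF))
    _ = _ := by
      rw [card_filter_powersetCard_not_disjoint,
        card_pair (Fin.ne_of_val_ne (show k ≠ n - 1 by omega)),
        Fintype.card_fin]
      obtain ⟨l, rfl⟩ : ∃ l, n = l + 2 := ⟨n - 2, by omega⟩
      simp only [Nat.choose_succ_succ, Nat.choose_zero_right, Nat.succ_eq_add_one, zero_add,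
        Nat.choose_one_right, Nat.reduceAdd, add_tsub_cancel_right]
      omega

end Gnm

section triGraph

variable {n : ℕ} (h4 : 4 ≤ n)

theorem triGraph_ends_of_lt {e : Fin n} (he : e.val < n - 1) :
    (triGraph n h4).ends e = s(⟨e.val, by omega⟩, ⟨e.val + 1, by omega⟩) := by
  simp only [triGraph]
  split_ifs <;> simp only [Sym2.eq_iff, Fin.mk.injEq] <;> omega

theorem triGraph_ends_last :
    (triGraph n h4).ends ⟨n - 1, by omega⟩ =
      s(⟨n - 1, by omega⟩, ⟨n - 3, by omega⟩) := by
  simp only [triGraph]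
  split_ifs <;> first | omega | rfl

theorem triGraph_val_le_iff_of_ends {c : ℕ} {e u v : Fin n} (h : (triGraph n h4).ends e = s(u, v))
    (hc : c < n - 3) (he : e.val ≠ c) : u.val ≤ c ↔ v.val ≤ c := by
  rcases lt_or_ge e.val (n - 1) with he' | he'
  · rw [triGraph_ends_of_lt h4 he'] at h
    exact Sym2.iff_of_mk_eq_mk (P := fun w : Fin n => w.val ≤ c) h (by dsimp only; omega)
  · rw [show e = ⟨n - 1, by omega⟩ from Fin.ext (show e.val = n - 1 by omega),
      triGraph_ends_last h4] at h
    exact Sym2.iff_of_mk_eq_mk (P := fun w : Fin n => w.val ≤ c) h (by dsimp only; omega)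

theorem triGraph_splitState_compl_pair {i j : Fin n} (hi : i.val < n - 3) (hj : n - 3 ≤ j.val) :
    (triGraph n h4).SplitState ⟨0, by omega⟩ ⟨n - 3, by omega⟩ {i, j}ᶜ := by
  have hadj (m : ℕ) (hm : m + 1 < n) (hmi : m ≠ i.val) (hmj : m ≠ j.val) :
      ((triGraph n h4).subgraph {i, j}ᶜ).Adj ⟨m, by omega⟩ ⟨m + 1, hm⟩ :=
    subgraph_adj_of_mem ((Fin.mem_compl_pair_iff (e := ⟨m, by omega⟩)).mpr ⟨hmi, hmj⟩)
      (triGraph_ends_of_lt h4 (e := ⟨m, by omega⟩) (by dsimp only; omega))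
  refine splitState_of_cut (fun v : Fin n => v.val ≤ i.val) ?_ (Nat.zero_le _)
    (by dsimp only; omega) ?_ ?_
  · intro (e : Fin n) he (u : Fin n) (v : Fin n) h
    exact triGraph_val_le_iff_of_ends h4 h hi (Fin.mem_compl_pair_iff.mp he).1
  · intro v hv
    exact (SimpleGraph.reachable_fin_of_adj_succ _ _ (Nat.zero_le _)
      fun m hm _ hmv => hadj m hm (by omega) (by omega)).symm
  · intro (v : Fin n) hv
    replace hv : i.val < v.val := by simpa using hv
    rcases le_or_gt v.val (n - 3) with hvt | hvt
    · exact SimpleGraph.reachable_fin_of_adj_succ _ _ hvt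
        fun m hm hvm _ => hadj m hm (by omega) (by omega)
    rcases le_or_gt v.val j.val with hvj | hjv
    · exact (SimpleGraph.reachable_fin_of_adj_succ _ _ hvt.le
        fun m hm _ hmv => hadj m hm (by omega) (by omega)).symm
    -- `j < v ≤ n - 1`, so the edge `n - 1` joining `v_{n-1}` and `t` survives
    have hclose :
        ((triGraph n h4).subgraph {i, j}ᶜ).Adj ⟨n - 1, by omega⟩ ⟨n - 3, by omega⟩ :=
      subgraph_adj_of_mem ((Fin.mem_compl_pair_iff (e := ⟨n - 1, by omega⟩)).mpr
        ⟨show n - 1 ≠ i.val by omega, show n - 1 ≠ j.val by omega⟩) (triGraph_ends_last h4)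
    exact (SimpleGraph.reachable_fin_of_adj_succ _ (by omega) (by omega)
      fun m hm hvm _ => hadj m hm (by omega) (by omega)).trans hclose.reachable

theorem triGraph_not_splitState_compl_pair_of_path {a b : Fin n} (hab : a.val < b.val)
    (hb : b.val < n - 3) :
    ¬(triGraph n h4).SplitState ⟨0, by omega⟩ ⟨n - 3, by omega⟩ {a, b}ᶜ := by
  refine not_splitState_of_closed (v := (⟨a.val + 1, by omega⟩ : Fin n))
    (fun v : Fin n => a.val < v.val ∧ v.val ≤ b.val) ?_ (by dsimp only; omega)
    (by dsimp only; omega) (by dsimp only; omega)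
  intro (e : Fin n) he (u : Fin n) (v : Fin n) h
  replace he := Fin.mem_compl_pair_iff.mp he
  have := triGraph_val_le_iff_of_ends h4 h (by omega) he.1
  have := triGraph_val_le_iff_of_ends h4 h hb he.2
  omega

theorem triGraph_not_splitState_compl_pair_of_triangle {a b : Fin n} (ha : n - 3 ≤ a.val)
    (hb : n - 3 ≤ b.val) :
    ¬(triGraph n h4).SplitState ⟨0, by omega⟩ ⟨n - 3, by omega⟩ {a, b}ᶜ := by
  refine fun hsplit => hsplit.1 (SimpleGraph.reachable_fin_of_adj_succ _ _ (Nat.zero_le _)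
    fun m hm _ hmt => ?_)
  exact subgraph_adj_of_mem
    (Fin.mem_compl_pair_iff.mpr ⟨by dsimp only; omega, by dsimp only; omega⟩)
    (triGraph_ends_of_lt h4 (e := ⟨m, by omega⟩) (by dsimp only; omega))

theorem triGraph_splitState_compl_iff {F : Finset (Fin n)} (hF : #F = 2) :
    (triGraph n h4).SplitState ⟨0, by omega⟩ ⟨n - 3, by omega⟩ Fᶜ ↔
      #(F ∩ Iio ⟨n - 3, by omega⟩) = 1 := by
  obtain ⟨a, b, hab, rfl⟩ := card_eq_two.mp hF
  have hab' : a.val ≠ b.val := Fin.val_ne_of_ne hab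
  have hpath (x : Fin n) : x ∈ Iio (⟨n - 3, by omega⟩ : Fin n) ↔ x.val < n - 3 := by
    simp [Fin.lt_def]
  rcases lt_or_ge a.val (n - 3) with ha | ha <;> rcases lt_or_ge b.val (n - 3) with hb | hb
  · rw [insert_inter_of_mem ((hpath a).2 ha), singleton_inter_of_mem ((hpath b).2 hb),
      card_pair hab]
    refine iff_of_false ?_ (by decide)
    rcases lt_or_gt_of_ne hab' with h | h
    · exact triGraph_not_splitState_compl_pair_of_path h4 h hb
    · rw [pair_comm]
      exact triGraph_not_splitState_compl_pair_of_path h4 h ha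
  · rw [insert_inter_of_mem ((hpath a).2 ha),
      singleton_inter_of_notMem (fun h => by rw [hpath] at h; omega)]
    exact iff_of_true (triGraph_splitState_compl_pair h4 ha hb) (by simp)
  · rw [insert_inter_of_notMem (fun h => by rw [hpath] at h; omega),
      singleton_inter_of_mem ((hpath b).2 hb), card_singleton, pair_comm]
    exact iff_of_true (triGraph_splitState_compl_pair h4 hb ha) rfl
  · rw [insert_inter_of_notMem (fun h => by rw [hpath] at h; omega),
      singleton_inter_of_notMem (fun h => by rw [hpath] at h; omega), card_empty]
    exact iff_of_false (triGraph_not_splitState_compl_pair_of_triangle h4 ha hb) (by decide)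

theorem triGraph_Nst :
    (triGraph n h4).Nst ⟨0, by omega⟩ ⟨n - 3, by omega⟩ (n - 2) = 3 * (n - 3) := by
  classical
  have hcard : Fintype.card (triGraph n h4).E = n := Fintype.card_fin n
  have h := Nst_card_sub (G := triGraph n h4) ⟨0, by omega⟩ ⟨n - 3, by omega⟩ (j := 2)
    (by omega)
  rw [hcard] at h
  rw [h]
  calc _ = #{F ∈ powersetCard 2 (univ : Finset (Fin n)) |
          #(F ∩ Iio ⟨n - 3, by omega⟩) = 1} :=
        congrArg card (filter_congr fun F hF =>
          triGraph_splitState_compl_iff h4 (mem_powersetCard_univ.mp hF))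
    _ = _ := by
      rw [card_filter_powersetCard_two_card_inter_eq_one, card_compl, Fin.card_Iio,
        Fintype.card_fin, show n - (n - 3) = 3 by omega, mul_comm]

end triGraph

end Multigraph

/-- For `n ≥ 7`, the graph consisting of a path `s = u_0, …, u_{n-3} = t`
of length `n-3` together with a triangle `t, w₁, w₂` satisfies `N_{n-2}(H,s,t) = 3(n-3)`,
and `3(n-3) > 1 + 2(n-2) = N_{n-2}(G_{n,n},s,t)`. -/
theorem Nst_triGraph (n : ℕ) (hn : 7 ≤ n) :
    (Multigraph.triGraph n (by omega)).Nst
        (⟨0, by omega⟩ : Fin n) (⟨n - 3, by omega⟩ : Fin n) (n - 2) = 3 * (n - 3) ∧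
    3 * (n - 3) > 1 + 2 * (n - 2) ∧
    (∀ (k : ℕ) (hk : k < n - 1),
      (Multigraph.Gnm n n k hk).Nst
          (⟨0, by omega⟩ : Fin n) (⟨n - 1, by omega⟩ : Fin n) (n - 2) =
        1 + 2 * (n - 2)) :=
  ⟨Multigraph.triGraph_Nst (by omega), by omega, fun _ hk => Multigraph.Gnm_Nst hk⟩
end
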